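/- arXiv:2303.05798 — 2 statements merged into one kernel-verified Lean document; each statement's English description precedes it below -/
import Mathlib

section
/- Let d ≥ 1 and p ≥ 1. For all μ, ν, α ∈ P_p(S_d^{++}(ℝ)): (i) SPDSW_p(μ,ν) is finite; (ii) SPDSW_p(μ,ν) ≥ 0 and SPDSW_p(μ,ν) = SPDSW_p(ν,μ); (iii) SPDSW_p(μ,ν) ≤ SPDSW_p(μ,α) + SPDSW_p(α,ν). -/
open MeasureTheory Matrix Filter
open scoped ENNReal NNReal

noncomputable section

/-- Square real matrices. -/
abbrev Mat (d : ℕ) := Matrix (Fin d) (Fin d) ℝ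

instance (d : ℕ) : MeasurableSpace (Mat d) :=
  (inferInstance : MeasurableSpace (Fin d → Fin d → ℝ))

instance (d : ℕ) : BorelSpace (Mat d) :=
  (inferInstance : BorelSpace (Fin d → Fin d → ℝ))

variable {d : ℕ}

/-- Frobenius inner product `⟨A,B⟩_F = Tr(AᵀB)`. -/
def frI (A B : Mat d) : ℝ := (Aᵀ * B).trace

/-- Frobenius norm. -/
def fro (A : Mat d) : ℝ := Real.sqrt (frI A A)

/-- The space of symmetric positive definite matrices, as a subtype. -/
abbrev SPD (d : ℕ) := {M : Mat d // M.PosDef}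

instance (d : ℕ) : Nonempty {A : Mat d // A.IsSymm} := ⟨⟨0, Matrix.isSymm_zero⟩⟩

/-- Matrix exponential. -/
def mexp (A : Mat d) : Mat d := NormedSpace.exp A

/-- The matrix exponential restricted to symmetric matrices. -/
def symExp (d : ℕ) : {A : Mat d // A.IsSymm} → Mat d := fun A => mexp A.1

/-- Matrix logarithm: the inverse of the matrix exponential restricted to
symmetric matrices (`exp : S_d(ℝ) → S_d^{++}(ℝ)` is a bijection, and `mlog`
coincides with its inverse on `S_d^{++}(ℝ)`). -/
def mlog (M : Mat d) : Mat d := (Function.invFun (symExp d) M).1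

/-- Log-Euclidean distance `d_LE(X,Y) = ‖log X - log Y‖_F`. -/
def dLE (X Y : Mat d) : ℝ := fro (mlog X - mlog Y)

/-- Projection coordinate `t^A(M) = Tr(A log M)` on the geodesic generated by `A`. -/
def tA (A : Mat d) (M : SPD d) : ℝ := (A * mlog M.1).trace

/-- A linear map of the matrix space which restricts to a surjective isometry of the
Euclidean space of symmetric matrices with the Frobenius inner product. -/
def IsSymIsometry (f : Mat d →ₗ[ℝ] Mat d) : Prop :=
  (∀ A : Mat d, A.IsSymm → (f A).IsSymm) ∧
  (∀ A B : Mat d, A.IsSymm → B.IsSymm → frI (f A) (f B) = frI A B) ∧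
  (∀ B : Mat d, B.IsSymm → ∃ A : Mat d, A.IsSymm ∧ f A = B)

/-- `λ_S` is the uniform probability distribution on the unit Frobenius sphere
`{A ∈ S_d(ℝ) : ‖A‖_F = 1}`: a Borel probability measure concentrated on this sphere and
invariant under every linear isometry of `(S_d(ℝ), ⟨·,·⟩_F)`; these properties
characterize it uniquely. -/
def IsUniformSymSphere (lamS : Measure (Mat d)) : Prop :=
  IsProbabilityMeasure lamS ∧
  lamS {A : Mat d | A.IsSymm ∧ fro A = 1}ᶜ = 0 ∧
  ∀ f : Mat d →ₗ[ℝ] Mat d, IsSymIsometry f → lamS.map f = lamS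

/-- The set of couplings between `α` and `β`. -/
def couplings {E : Type*} [MeasurableSpace E] (α β : Measure E) : Set (Measure (E × E)) :=
  {γ | γ.map Prod.fst = α ∧ γ.map Prod.snd = β}

/-- `W_p^p`, the `p`-th power of the `p`-Wasserstein distance with ground cost `ρ`. -/
def Wpp {E : Type*} [MeasurableSpace E] (ρ : E → E → ℝ) (p : ℝ) (α β : Measure E) : ℝ≥0∞ :=
  ⨅ γ ∈ couplings α β, ∫⁻ z, ENNReal.ofReal (ρ z.1 z.2) ^ p ∂γ

/-- `W_p^p` between measures on `ℝ`. -/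
def W1dpp (p : ℝ) (α β : Measure ℝ) : ℝ≥0∞ := Wpp (fun x y => |x - y|) p α β

/-- `μ ∈ P_p(S_d^{++}(ℝ))`: a Borel probability measure with finite `p`-th moment for
the Log-Euclidean distance. -/
def MemPp (p : ℝ) (μ : Measure (SPD d)) : Prop :=
  IsProbabilityMeasure μ ∧ ∫⁻ X, ENNReal.ofReal (dLE X.1 1 ^ p) ∂μ < ⊤

/-- `SPDSW_p^p(μ,ν) = ∫ W_p^p(t^A_#μ, t^A_#ν) dλ_S(A)`. -/
def SPDSWpp (p : ℝ) (lamS : Measure (Mat d)) (μ ν : Measure (SPD d)) : ℝ≥0∞ :=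
  ∫⁻ A, W1dpp p (μ.map (tA A)) (ν.map (tA A)) ∂lamS

/-- `SPDSW_p(μ,ν)`. -/
def SPDSW (p : ℝ) (lamS : Measure (Mat d)) (μ ν : Measure (SPD d)) : ℝ≥0∞ :=
  SPDSWpp p lamS μ ν ^ (1 / p)

/-- `W_p^p` on `S_d^{++}(ℝ)` with the Log-Euclidean ground metric. -/
def WLEpp (p : ℝ) (μ ν : Measure (SPD d)) : ℝ≥0∞ :=
  Wpp (fun X Y => dLE X.1 Y.1) p μ ν

/-- The pushforward `log_#μ` of a measure on `S_d^{++}(ℝ)`. -/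
def logPush (μ : Measure (SPD d)) : Measure (Mat d) :=
  μ.map (fun M : SPD d => mlog M.1)

/-!
For every direction `A`, the slices `t^A_#μ`, `t^A_#ν` are measures on `ℝ`, and `SPDSW_p(μ, ν)`
is the `L^p(λ_S)` norm of `A ↦ W_p(t^A_#μ, t^A_#ν)`. Symmetry is inherited from `W_p` on `ℝ`,
and the triangle inequality from that of `W_p` (gluing lemma) combined with Minkowski's
inequality in `L^p(λ_S)`. Both finiteness and the measurability in `A` needed for Minkowski
come from `|t^A X - t^B X| ≤ ‖A - B‖_F ‖log X‖_F`: it makes `A ↦ W_p(t^A_#μ, t^A_#ν)` vanish at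
`A = 0` and Lipschitz, with constant the sum of the `p`-th log-moments of `μ` and `ν`.
-/

open ProbabilityTheory

theorem measurable_invFun_of_injective {α β : Type*} [MeasurableSpace α] [StandardBorelSpace α]
    [Nonempty α] [MeasurableSpace β] [MeasurableSpace.CountablySeparated β] {f : α → β}
    (hf : Measurable f) (hinj : Function.Injective f) : Measurable (Function.invFun f) := by
  convert (hf.measurableEmbedding hinj).measurable_extend measurable_id
    (measurable_const (a := Classical.arbitrary α)) using 1
  ext y
  simp only [Function.invFun, Function.extend, id]

theorem eLpNorm_ofReal_eq_lintegral_rpow {X ε : Type*} [MeasurableSpace X] [ENorm ε] {p : ℝ}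
    (hp : 0 < p) (μ : Measure X) (f : X → ε) :
    eLpNorm f (ENNReal.ofReal p) μ = (∫⁻ x, ‖f x‖ₑ ^ p ∂μ) ^ (1 / p) := by
  rw [eLpNorm_eq_lintegral_rpow_enorm_toReal (by simpa using hp) ENNReal.ofReal_ne_top,
    ENNReal.toReal_ofReal hp.le]

section Wasserstein

variable {E : Type*} [MeasurableSpace E] {ρ : E → E → ℝ} {p : ℝ}

def transportCost (ρ : E → E → ℝ) (p : ℝ) (γ : Measure (E × E)) : ℝ≥0∞ :=
  ∫⁻ z, ENNReal.ofReal (ρ z.1 z.2) ^ p ∂γ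

theorem Wpp_le_transportCost {α β : Measure E} {γ : Measure (E × E)} (hγ : γ ∈ couplings α β) :
    Wpp ρ p α β ≤ transportCost ρ p γ :=
  iInf₂_le γ hγ

theorem Wpp_rpow_eq_iInf (hp : 0 < p) (α β : Measure E) :
    Wpp ρ p α β ^ (1 / p) = ⨅ γ ∈ couplings α β, transportCost ρ p γ ^ (1 / p) := by
  simp only [Wpp, ← ENNReal.orderIsoRpow_apply (1 / p) (one_div_pos.2 hp), OrderIso.map_iInf]
  rfl

theorem Wpp_map_le {X : Type*} [MeasurableSpace X] (μ : Measure X) {f g : X → E}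
    (hf : Measurable f) (hg : Measurable g) :
    Wpp ρ p (μ.map f) (μ.map g) ≤ ∫⁻ x, ENNReal.ofReal (ρ (f x) (g x)) ^ p ∂μ := by
  have hfg : Measurable fun x => (f x, g x) := hf.prodMk hg
  refine (Wpp_le_transportCost (γ := μ.map fun x => (f x, g x)) ⟨?_, ?_⟩).trans
    (lintegral_map_le _ _)
  · rw [Measure.map_map measurable_fst hfg]; rfl
  · rw [Measure.map_map measurable_snd hfg]; rfl

theorem Wpp_comm (hρ : ∀ x y, ρ x y = ρ y x) (α β : Measure E) : Wpp ρ p α β = Wpp ρ p β α := by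
  suffices ∀ α β : Measure E, Wpp ρ p β α ≤ Wpp ρ p α β from le_antisymm (this β α) (this α β)
  intro α β
  refine le_iInf₂ fun γ ⟨hα, hβ⟩ => ?_
  calc Wpp ρ p β α ≤ transportCost ρ p (γ.map Prod.swap) := by
        refine Wpp_le_transportCost ⟨?_, ?_⟩
        · rwa [Measure.map_map measurable_fst measurable_swap]
        · rwa [Measure.map_map measurable_snd measurable_swap]
    _ ≤ transportCost ρ p γ := by
        refine (lintegral_map_le _ _).trans_eq ?_
        simp only [transportCost, Prod.fst_swap, Prod.snd_swap, hρ]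

variable [StandardBorelSpace E] [Nonempty E]

theorem exists_gluing {α β δ : Measure E} [IsFiniteMeasure β] {γ₁ γ₂ : Measure (E × E)}
    (h₁ : γ₁ ∈ couplings α β) (h₂ : γ₂ ∈ couplings β δ) :
    ∃ θ : Measure (E × E × E), θ.map (fun q => (q.1, q.2.1)) = γ₁ ∧ θ.map Prod.snd = γ₂ := by
  have hβ₁ : γ₁.snd = β := h₁.2
  have hβ₂ : γ₂.fst = β := h₂.1
  have : IsFiniteMeasure γ₁ := ⟨by rw [← Measure.snd_univ, hβ₁]; exact measure_lt_top β _⟩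
  have : IsFiniteMeasure γ₂ := ⟨by rw [← Measure.fst_univ, hβ₂]; exact measure_lt_top β _⟩
  set κ := (γ₁.map Prod.swap).condKernel
  set η := γ₂.condKernel
  have hκ : β ⊗ₘ κ = γ₁.map Prod.swap := by
    rw [← hβ₁, ← Measure.fst_map_swap]; exact Measure.disintegrate _ _
  have hη : β ⊗ₘ η = γ₂ := hβ₂ ▸ Measure.disintegrate _ _
  have hmeas : Measurable fun q : E × E × E => (q.2.1, q.1, q.2.2) := by fun_prop
  -- Draw the middle point `y` from `β`, then `x` and `z` independently from the conditional
  -- laws of `γ₁` and `γ₂` given `y`.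
  refine ⟨(β ⊗ₘ (κ ×ₖ η)).map fun q => (q.2.1, q.1, q.2.2), ?_, ?_⟩
  · rw [Measure.map_map (by fun_prop) hmeas]
    change (β ⊗ₘ (κ ×ₖ η)).map (Prod.swap ∘ Prod.map id Prod.fst) = γ₁
    rw [← Measure.map_map measurable_swap (measurable_id.prodMap measurable_fst),
      ← Measure.compProd_map measurable_fst, ← Kernel.fst_eq, Kernel.fst_prod, hκ,
      Measure.map_map measurable_swap measurable_swap, Prod.swap_swap_eq, Measure.map_id]
  · rw [Measure.map_map measurable_snd hmeas]
    change (β ⊗ₘ (κ ×ₖ η)).map (Prod.map id Prod.snd) = γ₂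
    rw [← Measure.compProd_map measurable_snd, ← Kernel.snd_eq, Kernel.snd_prod, hη]

theorem Wpp_rpow_triangle (hρm : Measurable (Function.uncurry ρ))
    (hρ : ∀ x y z, ρ x z ≤ ρ x y + ρ y z) (hp : 1 ≤ p) (α β δ : Measure E) [IsFiniteMeasure β] :
    Wpp ρ p α δ ^ (1 / p) ≤ Wpp ρ p α β ^ (1 / p) + Wpp ρ p β δ ^ (1 / p) := by
  have hp0 : 0 < p := zero_lt_one.trans_le hp
  rw [Wpp_rpow_eq_iInf hp0 α β, Wpp_rpow_eq_iInf hp0 β δ]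
  refine ENNReal.le_iInf₂_add_iInf₂ fun γ₁ h₁ γ₂ h₂ => ?_
  obtain ⟨θ, hθ₁, hθ₂⟩ := exists_gluing h₁ h₂
  have hc : Measurable fun z : E × E => ENNReal.ofReal (ρ z.1 z.2) ^ p :=
    hρm.ennreal_ofReal.pow_const p
  have hxy : Measurable fun q : E × E × E => (q.1, q.2.1) := by fun_prop
  have hxz : Measurable fun q : E × E × E => (q.1, q.2.2) := by fun_prop
  have hcoupling : θ.map (fun q => (q.1, q.2.2)) ∈ couplings α δ := by
    constructor
    · rw [Measure.map_map measurable_fst hxz, ← h₁.1, ← hθ₁, Measure.map_map measurable_fst hxy]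
      rfl
    · rw [Measure.map_map measurable_snd hxz, ← h₂.2, ← hθ₂,
        Measure.map_map measurable_snd measurable_snd]
      rfl
  set f₁ : E × E × E → ℝ≥0∞ := fun q => ENNReal.ofReal (ρ q.1 q.2.1)
  set f₂ : E × E × E → ℝ≥0∞ := fun q => ENNReal.ofReal (ρ q.2.1 q.2.2)
  have hcost₁ : ∫⁻ q, f₁ q ^ p ∂θ = transportCost ρ p γ₁ := by
    rw [← hθ₁, transportCost, lintegral_map hc hxy]
  have hcost₂ : ∫⁻ q, f₂ q ^ p ∂θ = transportCost ρ p γ₂ := by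
    rw [← hθ₂, transportCost, lintegral_map hc measurable_snd]
  calc Wpp ρ p α δ ^ (1 / p)
      ≤ transportCost ρ p (θ.map fun q => (q.1, q.2.2)) ^ (1 / p) := by
        gcongr; exact Wpp_le_transportCost hcoupling
    _ ≤ (∫⁻ q, (f₁ q + f₂ q) ^ p ∂θ) ^ (1 / p) := by
        rw [transportCost, lintegral_map hc hxz]
        gcongr with q
        exact (ENNReal.ofReal_le_ofReal (hρ _ _ _)).trans ENNReal.ofReal_add_le
    _ ≤ (∫⁻ q, f₁ q ^ p ∂θ) ^ (1 / p) + (∫⁻ q, f₂ q ^ p ∂θ) ^ (1 / p) :=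
        ENNReal.lintegral_Lp_add_le (hρm.comp hxy).ennreal_ofReal.aemeasurable
          (hρm.comp measurable_snd).ennreal_ofReal.aemeasurable hp
    _ = transportCost ρ p γ₁ ^ (1 / p) + transportCost ρ p γ₂ ^ (1 / p) := by
        rw [hcost₁, hcost₂]

end Wasserstein

theorem W1dpp_comm (p : ℝ) (α β : Measure ℝ) : W1dpp p α β = W1dpp p β α :=
  Wpp_comm abs_sub_comm α β

theorem W1dpp_rpow_triangle {p : ℝ} (hp : 1 ≤ p) (α β δ : Measure ℝ) [IsFiniteMeasure β] :
    W1dpp p α δ ^ (1 / p) ≤ W1dpp p α β ^ (1 / p) + W1dpp p β δ ^ (1 / p) :=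
  Wpp_rpow_triangle (ρ := fun x y => |x - y|) (measurable_fst.sub measurable_snd).abs abs_sub_le
    hp α β δ

theorem W1dpp_map_rpow_le_eLpNorm {X : Type*} [MeasurableSpace X] {p : ℝ} (hp : 0 < p)
    (μ : Measure X) {f g : X → ℝ} (hf : Measurable f) (hg : Measurable g) :
    W1dpp p (μ.map f) (μ.map g) ^ (1 / p) ≤ eLpNorm (f - g) (ENNReal.ofReal p) μ := by
  rw [eLpNorm_ofReal_eq_lintegral_rpow hp]
  simp only [Pi.sub_apply, Real.enorm_eq_ofReal_abs]
  gcongr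
  exact Wpp_map_le μ hf hg

theorem symExp_injective : Function.Injective (symExp d) := by
  rintro ⟨A, hA⟩ ⟨B, hB⟩ h
  let := Matrix.instL2OpNormedRing (n := Fin d) (𝕜 := ℝ)
  let := Matrix.instL2OpNormedAlgebra (n := Fin d) (𝕜 := ℝ)
  rw [Subtype.mk.injEq, ← CFC.log_exp A hA, ← CFC.log_exp B hB]
  exact congrArg CFC.log h

theorem continuous_mexp : Continuous (mexp : Mat d → Mat d) := by
  let := Matrix.linftyOpNormedRing (n := Fin d) (α := ℝ)
  let := Matrix.linftyOpNormedAlgebra (n := Fin d) (R := ℝ) (α := ℝ)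
  let := Matrix.linftyOpNormedAlgebra (n := Fin d) (R := ℚ) (α := ℝ)
  exact NormedSpace.exp_continuous

instance : StandardBorelSpace (Mat d) :=
  inferInstanceAs (StandardBorelSpace (Fin d → Fin d → ℝ))

instance : StandardBorelSpace {A : Mat d // A.IsSymm} :=
  (isClosed_eq continuous_id.matrix_transpose continuous_id).measurableSet.standardBorel

theorem measurable_mlog : Measurable (mlog : Mat d → Mat d) :=
  measurable_subtype_coe.comp <| measurable_invFun_of_injective
    (continuous_mexp.measurable.comp measurable_subtype_coe) symExp_injective

theorem mlog_one : mlog (1 : Mat d) = 0 := by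
  have h : symExp d ⟨0, isSymm_zero⟩ = 1 := NormedSpace.exp_zero
  rw [mlog, ← h, Function.leftInverse_invFun symExp_injective]

theorem frI_eq_inner (A B : Mat d) :
    frI A B = inner ℝ (WithLp.toLp 2 fun i => WithLp.toLp 2 (A i))
      (WithLp.toLp 2 fun i => WithLp.toLp 2 (B i)) := by
  simp only [frI, trace, diag, mul_apply, transpose_apply, PiLp.inner_apply, RCLike.inner_apply,
    conj_trivial, mul_comm]
  exact Finset.sum_comm

theorem fro_nonneg (A : Mat d) : 0 ≤ fro A := Real.sqrt_nonneg _

theorem fro_transpose (A : Mat d) : fro Aᵀ = fro A := by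
  simp only [fro, frI, transpose_transpose, trace_mul_comm A]

theorem abs_trace_mul_le (A B : Mat d) : |(A * B).trace| ≤ fro A * fro B := by
  have h : (A * B).trace = frI Aᵀ B := by rw [frI, transpose_transpose]
  rw [h, ← fro_transpose A, fro, fro, frI_eq_inner, frI_eq_inner, frI_eq_inner,
    real_inner_self_eq_norm_sq, real_inner_self_eq_norm_sq,
    Real.sqrt_sq (norm_nonneg _), Real.sqrt_sq (norm_nonneg _)]
  exact abs_real_inner_le_norm _ _

theorem continuous_of_le_add_fro {f : Mat d → ℝ≥0∞} (C : ℝ≥0∞) (hC : C ≠ ⊤)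
    (h : ∀ A B, f A ≤ f B + ENNReal.ofReal (fro (A - B)) * C) : Continuous f := by
  -- The Frobenius metric induces, definitionally, the product topology of `Mat d`.
  let := Matrix.frobeniusNormedAddCommGroup (m := Fin d) (n := Fin d) (α := ℝ)
  refine continuous_of_le_add_edist C hC fun A B => (h A B).trans_eq ?_
  rw [mul_comm, edist_dist, dist_eq_norm, fro, frI_eq_inner, real_inner_self_eq_norm_sq,
    Real.sqrt_sq (norm_nonneg _)]
  rfl

theorem measurable_tA (A : Mat d) : Measurable (tA A) :=
  ((continuous_const.matrix_mul continuous_id).matrix_trace.measurable.comp measurable_mlog).comp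
    measurable_subtype_coe

theorem abs_tA_sub_tA_le (A B : Mat d) (X : SPD d) :
    |tA A X - tA B X| ≤ fro (A - B) * fro (mlog X.1) := by
  rw [tA, tA, ← trace_sub, ← Matrix.sub_mul]
  exact abs_trace_mul_le _ _

def logMoment (p : ℝ) (μ : Measure (SPD d)) : ℝ≥0∞ :=
  eLpNorm (fun X : SPD d => fro (mlog X.1)) (ENNReal.ofReal p) μ

theorem MemPp.logMoment_ne_top {p : ℝ} (hp : 0 < p) {μ : Measure (SPD d)} (hμ : MemPp p μ) :
    logMoment p μ ≠ ⊤ := by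
  have hdLE : ∀ X : SPD d, dLE X.1 1 = fro (mlog X.1) := fun X => by
    rw [dLE, mlog_one, sub_zero]
  rw [logMoment, eLpNorm_ofReal_eq_lintegral_rpow hp]
  refine ENNReal.rpow_ne_top_of_nonneg (by positivity) (ne_of_lt ?_)
  simpa only [hdLE, Real.enorm_eq_ofReal (fro_nonneg _),
    ENNReal.ofReal_rpow_of_nonneg (fro_nonneg _) hp.le] using hμ.2

def slicedW (p : ℝ) (μ ν : Measure (SPD d)) (A : Mat d) : ℝ≥0∞ :=
  W1dpp p (μ.map (tA A)) (ν.map (tA A)) ^ (1 / p)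

section Sliced

variable {p : ℝ} {μ ν α : Measure (SPD d)}

theorem W1dpp_map_tA_rpow_le (hp : 0 < p) (μ : Measure (SPD d)) (A B : Mat d) :
    W1dpp p (μ.map (tA A)) (μ.map (tA B)) ^ (1 / p)
      ≤ ENNReal.ofReal (fro (A - B)) * logMoment p μ := by
  refine (W1dpp_map_rpow_le_eLpNorm hp μ (measurable_tA A) (measurable_tA B)).trans
    (eLpNorm_le_mul_eLpNorm_of_ae_le_mul (Eventually.of_forall fun X => ?_) _)
  rw [Real.norm_eq_abs, Real.norm_of_nonneg (fro_nonneg _)]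
  exact abs_tA_sub_tA_le A B X

theorem slicedW_triangle (hp : 1 ≤ p) [IsFiniteMeasure α] (A : Mat d) :
    slicedW p μ ν A ≤ slicedW p μ α A + slicedW p α ν A :=
  W1dpp_rpow_triangle hp _ _ _

theorem slicedW_le_add (hp : 1 ≤ p) [IsFiniteMeasure μ] [IsFiniteMeasure ν] (A B : Mat d) :
    slicedW p μ ν A
      ≤ slicedW p μ ν B + ENNReal.ofReal (fro (A - B)) * (logMoment p μ + logMoment p ν) := by
  have hp0 : 0 < p := zero_lt_one.trans_le hp
  calc slicedW p μ ν A
      ≤ W1dpp p (μ.map (tA A)) (μ.map (tA B)) ^ (1 / p)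
        + W1dpp p (μ.map (tA B)) (ν.map (tA A)) ^ (1 / p) := W1dpp_rpow_triangle hp _ _ _
    _ ≤ W1dpp p (μ.map (tA A)) (μ.map (tA B)) ^ (1 / p)
        + (slicedW p μ ν B + W1dpp p (ν.map (tA B)) (ν.map (tA A)) ^ (1 / p)) := by
        gcongr; exact W1dpp_rpow_triangle hp _ _ _
    _ ≤ ENNReal.ofReal (fro (A - B)) * logMoment p μ
        + (slicedW p μ ν B + ENNReal.ofReal (fro (A - B)) * logMoment p ν) := by
        rw [W1dpp_comm p (ν.map (tA B))]
        gcongr <;> exact W1dpp_map_tA_rpow_le hp0 _ A B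
    _ = _ := by ring

theorem slicedW_zero (hp : 0 < p) [IsProbabilityMeasure μ] [IsProbabilityMeasure ν] :
    slicedW p μ ν 0 = 0 := by
  have hdirac : ∀ (ξ : Measure (SPD d)) [IsProbabilityMeasure ξ],
      ξ.map (tA 0) = Measure.dirac 0 := by
    intro ξ _
    have : tA (0 : Mat d) = fun _ => 0 := by funext X; simp [tA]
    rw [this, Measure.map_const, measure_univ, one_smul]
  rw [slicedW, hdirac ν, ← hdirac μ]
  refine le_antisymm ?_ zero_le
  exact (W1dpp_map_rpow_le_eLpNorm hp μ (measurable_tA 0) (measurable_tA 0)).trans_eq (by simp)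

theorem slicedW_le (hp : 1 ≤ p) [IsProbabilityMeasure μ] [IsProbabilityMeasure ν] (A : Mat d) :
    slicedW p μ ν A ≤ ENNReal.ofReal (fro A) * (logMoment p μ + logMoment p ν) := by
  simpa [slicedW_zero (zero_lt_one.trans_le hp)] using slicedW_le_add hp (μ := μ) (ν := ν) A 0

theorem continuous_slicedW (hp : 1 ≤ p) (hμ : MemPp p μ) (hν : MemPp p ν) :
    Continuous (slicedW p μ ν) := by
  have := hμ.1
  have := hν.1
  have hp0 : 0 < p := zero_lt_one.trans_le hp
  exact continuous_of_le_add_fro _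
    (ENNReal.add_ne_top.2 ⟨hμ.logMoment_ne_top hp0, hν.logMoment_ne_top hp0⟩)
    (slicedW_le_add hp)

end Sliced

section SPDSW

variable {p : ℝ} {lamS : Measure (Mat d)} {μ ν α : Measure (SPD d)}

theorem SPDSW_eq_eLpNorm_slicedW (hp : 0 < p) :
    SPDSW p lamS μ ν = eLpNorm (slicedW p μ ν) (ENNReal.ofReal p) lamS := by
  simp only [eLpNorm_ofReal_eq_lintegral_rpow hp, enorm_eq_self, slicedW,
    ← ENNReal.rpow_mul, one_div_mul_cancel hp.ne', ENNReal.rpow_one]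
  rfl

theorem SPDSW_comm : SPDSW p lamS μ ν = SPDSW p lamS ν μ := by
  simp only [SPDSW, SPDSWpp, W1dpp_comm p (μ.map _)]

theorem SPDSW_triangle (hp : 1 ≤ p) (hμ : MemPp p μ) (hν : MemPp p ν) (hα : MemPp p α) :
    SPDSW p lamS μ ν ≤ SPDSW p lamS μ α + SPDSW p lamS α ν := by
  have := hα.1
  have hp0 : 0 < p := zero_lt_one.trans_le hp
  simp only [SPDSW_eq_eLpNorm_slicedW hp0]
  calc eLpNorm (slicedW p μ ν) (ENNReal.ofReal p) lamS
      ≤ eLpNorm (slicedW p μ α + slicedW p α ν) (ENNReal.ofReal p) lamS :=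
        eLpNorm_mono_enorm fun A => by simpa using slicedW_triangle hp A
    _ ≤ _ := eLpNorm_add_le (continuous_slicedW hp hμ hα).aestronglyMeasurable
        (continuous_slicedW hp hα hν).aestronglyMeasurable (by simpa using hp)

theorem SPDSW_ne_top (hp : 1 ≤ p) [IsFiniteMeasure lamS] (hlamS : ∀ᵐ A ∂lamS, fro A = 1)
    (hμ : MemPp p μ) (hν : MemPp p ν) : SPDSW p lamS μ ν ≠ ⊤ := by
  have := hμ.1
  have := hν.1
  have hp0 : 0 < p := zero_lt_one.trans_le hp
  have hbound : ∀ᵐ A ∂lamS, ‖slicedW p μ ν A‖ₑ ≤ logMoment p μ + logMoment p ν := by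
    filter_upwards [hlamS] with A hA
    simpa [hA] using slicedW_le hp A
  rw [SPDSW_eq_eLpNorm_slicedW hp0]
  refine ne_top_of_le_ne_top ?_ (eLpNorm_le_of_ae_enorm_bound hbound)
  exact ENNReal.mul_ne_top
    (ENNReal.add_ne_top.2 ⟨hμ.logMoment_ne_top hp0, hν.logMoment_ne_top hp0⟩)
    (ENNReal.rpow_ne_top_of_nonneg (by positivity) (measure_ne_top _ _))

end SPDSW

theorem IsUniformSymSphere.ae_fro_eq_one {lamS : Measure (Mat d)} (h : IsUniformSymSphere lamS) :
    ∀ᵐ A ∂lamS, fro A = 1 := by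
  refine ae_iff.2 (measure_mono_null ?_ h.2.1)
  exact fun A hA hsphere => hA hsphere.2

theorem stmt4_general (d : ℕ) (p : ℝ) (hp : 1 ≤ p)
    (lamS : Measure (Mat d)) (hlamS : IsUniformSymSphere lamS)
    (μ ν α : Measure (SPD d)) (hμ : MemPp p μ) (hν : MemPp p ν) (hα : MemPp p α) :
    SPDSW p lamS μ ν ≠ ⊤ ∧
    0 ≤ SPDSW p lamS μ ν ∧
    SPDSW p lamS μ ν = SPDSW p lamS ν μ ∧
    SPDSW p lamS μ ν ≤ SPDSW p lamS μ α + SPDSW p lamS α ν := by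
  have := hlamS.1
  exact ⟨SPDSW_ne_top hp hlamS.ae_fro_eq_one hμ hν, zero_le, SPDSW_comm,
    SPDSW_triangle hp hμ hν hα⟩

/-- `SPDSW_p` is finite, nonnegative, symmetric, and satisfies the
triangle inequality on `P_p(S_d^{++}(ℝ))`. -/
theorem stmt4 (d : ℕ) (hd : 1 ≤ d) (p : ℝ) (hp : 1 ≤ p)
    (lamS : Measure (Mat d)) (hlamS : IsUniformSymSphere lamS)
    (μ ν α : Measure (SPD d)) (hμ : MemPp p μ) (hν : MemPp p ν) (hα : MemPp p α) :
    SPDSW p lamS μ ν ≠ ⊤ ∧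
    0 ≤ SPDSW p lamS μ ν ∧
    SPDSW p lamS μ ν = SPDSW p lamS ν μ ∧
    SPDSW p lamS μ ν ≤ SPDSW p lamS μ α + SPDSW p lamS α ν :=
  stmt4_general d p hp lamS hlamS μ ν α hμ hν hα

end
end

section
/- Let d ≥ 1, p ≥ 1, and let λ be the uniform probability measure on the unit sphere S^{d−1} = {θ ∈ ℝ^d : ‖θ‖_2 = 1}. Then for every S ∈ S_d(ℝ), ∫_{S^{d−1}} |⟨diag(θ), S⟩_F|^p dλ(θ) = (1/d) · (Σ_{i=1}^d S_{ii}²)^{p/2} · ∫_{S^{d−1}} ‖θ‖_p^p dλ(θ), where ⟨diag(θ), S⟩_F = Σ_{i=1}^d θ_i S_{ii} and ‖θ‖_p^p = Σ_{i=1}^d |θ_i|^p. -/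
open MeasureTheory Matrix Filter
open scoped ENNReal NNReal

noncomputable section

variable {d : ℕ}

/-- The uniform (rotation-invariant normalized surface) probability measure on the unit
sphere `S^{d-1} ⊆ ℝ^d`: characterized as a Borel probability measure concentrated on the
sphere and invariant under every linear isometry of `ℝ^d`. -/
def IsUniformSphere {d : ℕ} (lam : Measure (EuclideanSpace ℝ (Fin d))) : Prop :=
  IsProbabilityMeasure lam ∧
  lam (Metric.sphere (0 : EuclideanSpace ℝ (Fin d)) 1)ᶜ = 0 ∧
  ∀ f : EuclideanSpace ℝ (Fin d) ≃ₗᵢ[ℝ] EuclideanSpace ℝ (Fin d), lam.map f = lam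

/-! The left integrand is `|⟪θ, s⟫|^p`, where `s` is the diagonal of `S` viewed as a vector of
`ℝ^d`. The reflection exchanging two vectors of equal norm is a linear isometry, so it preserves
`λ`; hence `∫ |⟪θ, s⟫|^p dλ = ‖s‖^p ∫ |θ_j|^p dλ` for any coordinate `j`, and the same invariance
makes the `d` coordinate integrals `∫ |θ_i|^p dλ` on the right all equal. -/

open scoped RealInnerProductSpace

section InvariantMeasure

variable {E : Type*} [NormedAddCommGroup E] [InnerProductSpace ℝ E] [MeasurableSpace E]
  [BorelSpace E] {μ : Measure E}

lemma integral_comp_inner_eq_of_norm_eq (hμ : ∀ f : E ≃ₗᵢ[ℝ] E, μ.map f = μ) (g : ℝ → ℝ)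
    {u w : E} (h : ‖u‖ = ‖w‖) : ∫ θ, g ⟪θ, u⟫ ∂μ = ∫ θ, g ⟪θ, w⟫ ∂μ := by
  set R := Submodule.reflection (ℝ ∙ (u - w))ᗮ
  have hRu : R u = w := Submodule.reflection_sub h
  calc ∫ θ, g ⟪θ, u⟫ ∂μ = ∫ θ, g ⟪R θ, w⟫ ∂μ := by simp only [← hRu, R.inner_map_map]
    _ = ∫ θ, g ⟪θ, w⟫ ∂μ.map R :=
      (integral_map_equiv R.toHomeomorph.toMeasurableEquiv (fun θ => g ⟪θ, w⟫)).symm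
    _ = ∫ θ, g ⟪θ, w⟫ ∂μ := by rw [hμ R]

lemma integral_abs_inner_rpow_eq_norm_rpow_mul (hμ : ∀ f : E ≃ₗᵢ[ℝ] E, μ.map f = μ)
    {p : ℝ} (hp : p ≠ 0) (v : E) {w : E} (hw : ‖w‖ = 1) :
    ∫ θ, |⟪θ, v⟫| ^ p ∂μ = ‖v‖ ^ p * ∫ θ, |⟪θ, w⟫| ^ p ∂μ := by
  rcases eq_or_ne v 0 with rfl | hv
  · simp [Real.zero_rpow hp]
  have hv' : 0 < ‖v‖ := norm_pos_iff.2 hv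
  have hu : ‖‖v‖⁻¹ • v‖ = ‖w‖ := by
    rw [hw, norm_smul, norm_inv, norm_norm, inv_mul_cancel₀ hv'.ne']
  calc ∫ θ, |⟪θ, v⟫| ^ p ∂μ = ∫ θ, ‖v‖ ^ p * |⟪θ, ‖v‖⁻¹ • v⟫| ^ p ∂μ := by
        congr 1 with θ
        rw [real_inner_smul_right, abs_mul, abs_inv, abs_norm,
          Real.mul_rpow (inv_nonneg.2 hv'.le) (abs_nonneg _), Real.inv_rpow hv'.le,
          mul_inv_cancel_left₀ (Real.rpow_pos_of_pos hv' p).ne']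
    _ = ‖v‖ ^ p * ∫ θ, |⟪θ, w⟫| ^ p ∂μ := by
        rw [integral_const_mul, integral_comp_inner_eq_of_norm_eq hμ (|·| ^ p) hu]

end InvariantMeasure

section EuclideanSpace

variable {ι : Type*} [Fintype ι] {μ : Measure (EuclideanSpace ℝ ι)}

lemma integral_comp_apply_eq [DecidableEq ι]
    (hμ : ∀ f : EuclideanSpace ℝ ι ≃ₗᵢ[ℝ] EuclideanSpace ℝ ι, μ.map f = μ)
    (g : ℝ → ℝ) (i j : ι) : ∫ θ, g (θ i) ∂μ = ∫ θ, g (θ j) ∂μ := by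
  simpa [EuclideanSpace.inner_single_right] using
    integral_comp_inner_eq_of_norm_eq hμ g
      (u := EuclideanSpace.single i (1 : ℝ)) (w := EuclideanSpace.single j 1) (by simp)

lemma integrable_abs_apply_rpow [IsFiniteMeasure μ] (hμ : ∀ᵐ θ ∂μ, ‖θ‖ ≤ 1) {p : ℝ}
    (hp : 0 ≤ p) (i : ι) : Integrable (fun θ => |θ i| ^ p) μ := by
  refine .of_bound (by fun_prop) 1 (hμ.mono fun θ hθ => ?_)
  rw [Real.norm_eq_abs, abs_of_nonneg (by positivity)]
  exact Real.rpow_le_one (abs_nonneg _) ((PiLp.norm_apply_le θ i).trans hθ) hp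

end EuclideanSpace

theorem stmt14_general (d : ℕ) (hd : 1 ≤ d) (p : ℝ) (hp : 1 ≤ p)
    (lam : Measure (EuclideanSpace ℝ (Fin d))) (hlam : IsUniformSphere lam)
    (S : Mat d) :
    ∫ θ, |∑ i, θ i * S i i| ^ p ∂lam
      = (1 / d : ℝ) * (∑ i, S i i ^ 2) ^ (p / 2) * ∫ θ, (∑ i, |θ i| ^ p) ∂lam := by
  obtain ⟨hprob, hsph, hinv⟩ := hlam
  have hp0 : 0 < p := by linarith
  have hball : ∀ᵐ θ ∂lam, ‖θ‖ ≤ 1 := by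
    filter_upwards [mem_ae_iff.2 hsph] with θ hθ using (mem_sphere_zero_iff_norm.1 hθ).le
  set diagS : EuclideanSpace ℝ (Fin d) := WithLp.toLp 2 fun i => S i i
  let j : Fin d := ⟨0, hd⟩
  set I := ∫ θ, |θ j| ^ p ∂lam
  have hnorm : ‖diagS‖ ^ p = (∑ i, S i i ^ 2) ^ (p / 2) := by
    rw [show ∑ i, S i i ^ 2 = ‖diagS‖ ^ 2 from (EuclideanSpace.real_norm_sq_eq diagS).symm,
      ← Real.rpow_natCast, ← Real.rpow_mul (norm_nonneg _)]
    ring_nf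
  have hL : ∫ θ, |∑ i, θ i * S i i| ^ p ∂lam = (∑ i, S i i ^ 2) ^ (p / 2) * I := by
    have := integral_abs_inner_rpow_eq_norm_rpow_mul hinv hp0.ne' diagS
      (w := EuclideanSpace.single j 1) (by simp)
    simpa [hnorm, EuclideanSpace.inner_single_right, PiLp.inner_apply, diagS, mul_comm] using this
  have hR : ∫ θ, ∑ i, |θ i| ^ p ∂lam = d * I := by
    rw [integral_finsetSum _ fun i _ => integrable_abs_apply_rpow hball hp0.le i]
    simp [integral_comp_apply_eq hinv (|·| ^ p) _ j, I]
  rw [hL, hR]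
  field_simp

/-- For every symmetric `S`,
`∫_{S^{d−1}} |⟨diag(θ), S⟩_F|^p dλ(θ) = (1/d)·(Σ_i S_ii²)^{p/2}·∫_{S^{d−1}} ‖θ‖_p^p dλ(θ)`. -/
theorem stmt14 (d : ℕ) (hd : 1 ≤ d) (p : ℝ) (hp : 1 ≤ p)
    (lam : Measure (EuclideanSpace ℝ (Fin d))) (hlam : IsUniformSphere lam)
    (S : Mat d) (hS : S.IsSymm) :
    ∫ θ, |∑ i, θ i * S i i| ^ p ∂lam
      = (1 / d : ℝ) * (∑ i, S i i ^ 2) ^ (p / 2) * ∫ θ, (∑ i, |θ i| ^ p) ∂lam :=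
  stmt14_general d hd p hp lam hlam S

end
end
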